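/- (Lemma 2.1(2)) For every natural number n ≥ 1, all reals 0 < q < p ≤ 1 and every x ≥ 0, applying the (p,q)-Bleimann–Butzer–Hahn operator to the function t ↦ t/(1+t) gives L_n^{p,q}(t/(1+t); x) = p²q · ([n]_{p,q}/[n+1]_{p,q}) · x/(1+x). -/

import Mathlib

open Finset Filter
open scoped Classical

noncomputable section

/-- The `(p,q)`-integer `[n]_{p,q} = (p^n - q^n)/(p - q)`. -/
def pqInt (p q : ℝ) (n : ℕ) : ℝ := (p ^ n - q ^ n) / (p - q)

/-- The `(p,q)`-factorial. -/
def pqFact (p q : ℝ) : ℕ → ℝ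
  | 0 => 1
  | n + 1 => pqFact p q n * pqInt p q (n + 1)

/-- The `(p,q)`-binomial coefficient. -/
def pqBinom (p q : ℝ) (n k : ℕ) : ℝ :=
  pqFact p q n / (pqFact p q k * pqFact p q (n - k))

/-- `ℓ_n^{p,q}(x) = ∏_{s=0}^{n-1} (p^s + q^s x)`. -/
def pqEll (p q : ℝ) (n : ℕ) (x : ℝ) : ℝ :=
  ∏ s ∈ Finset.range n, (p ^ s + q ^ s * x)

/-- The node `p^{n-k+1}[k]_{p,q} / ([n-k+1]_{p,q} q^k)`. -/
def pqNode (p q : ℝ) (n k : ℕ) : ℝ :=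
  p ^ (n - k + 1) * pqInt p q k / (pqInt p q (n - k + 1) * q ^ k)

/-- The `(p,q)`-Bleimann–Butzer–Hahn operator. -/
def bbh (p q : ℝ) (n : ℕ) (f : ℝ → ℝ) (x : ℝ) : ℝ :=
  (p * q / pqEll p q n x) *
    ∑ k ∈ Finset.range (n + 1),
      f (pqNode p q n k) * p ^ ((n - k) * (n - k - 1) / 2) *
        q ^ (k * (k - 1) / 2) * pqBinom p q n k * x ^ k

/-- `δ_n(x)` from Theorem 3.1. -/
def pqDelta (p q : ℝ) (n : ℕ) (x : ℝ) : ℝ :=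
  (x / (1 + x)) ^ 2 *
      (p ^ 2 * q ^ 3 * pqInt p q n * pqInt p q (n - 1) / (pqInt p q (n + 1)) ^ 2 *
          ((1 + x) / (p + q * x)) -
        2 * p * q * pqInt p q n / pqInt p q (n + 1) + 1) +
    p ^ (n + 2) * q * pqInt p q n / (pqInt p q (n + 1)) ^ 2 * (x / (1 + x))

/-- Statistical convergence of a real sequence. -/
def StatConv (a : ℕ → ℝ) (l : ℝ) : Prop :=
  ∀ ε > (0 : ℝ), Tendsto (fun n : ℕ =>
    (((Finset.range (n + 1)).filter (fun k => ε ≤ |a k - l|)).card : ℝ) / n)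
    atTop (nhds 0)

/-- A modulus of continuity. -/
def IsModulus (ω : ℝ → ℝ) : Prop :=
  (∀ δ, 0 ≤ δ → 0 ≤ ω δ) ∧
  (∀ δ₁ δ₂, 0 ≤ δ₁ → δ₁ ≤ δ₂ → ω δ₁ ≤ ω δ₂) ∧
  (∀ δ₁ δ₂, 0 ≤ δ₁ → 0 ≤ δ₂ → ω (δ₁ + δ₂) ≤ ω δ₁ + ω δ₂) ∧
  Tendsto ω (nhdsWithin 0 (Set.Ioi 0)) (nhds 0)

/-- Membership in the class `H_ω`. -/
def MemHomega (ω f : ℝ → ℝ) : Prop :=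
  ∀ x y : ℝ, 0 ≤ x → 0 ≤ y → |f x - f y| ≤ ω |x / (1 + x) - y / (1 + y)|

/-- The modulus `ω̃(f; δ)`. -/
def omegaTilde (f : ℝ → ℝ) (δ : ℝ) : ℝ :=
  sSup {d | ∃ t x : ℝ, 0 ≤ t ∧ 0 ≤ x ∧ |t / (1 + t) - x / (1 + x)| ≤ δ ∧ d = |f t - f x|}

/-- The bivariate `(p,q)`-Bleimann–Butzer–Hahn operator. -/
def bbh2 (p₁ p₂ q₁ q₂ : ℝ) (n₁ n₂ : ℕ) (f : ℝ → ℝ → ℝ) (x y : ℝ) : ℝ :=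
  (p₁ * p₂ * q₁ * q₂ / (pqEll p₁ q₁ n₁ x * pqEll p₂ q₂ n₂ y)) *
    ∑ k₁ ∈ Finset.range (n₁ + 1), ∑ k₂ ∈ Finset.range (n₂ + 1),
      f (pqNode p₁ q₁ n₁ k₁) (pqNode p₂ q₂ n₂ k₂) *
        p₁ ^ ((n₁ - k₁) * (n₁ - k₁ - 1) / 2) * q₁ ^ (k₁ * (k₁ - 1) / 2) *
        p₂ ^ ((n₂ - k₂) * (n₂ - k₂ - 1) / 2) * q₂ ^ (k₂ * (k₂ - 1) / 2) *
        pqBinom p₁ q₁ n₁ k₁ * pqBinom p₂ q₂ n₂ k₂ * x ^ k₁ * y ^ k₂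

/-- Statistical convergence of a double real sequence (Pringsheim sense). -/
def StatConv2 (a : ℕ → ℕ → ℝ) (l : ℝ) : Prop :=
  ∀ ε > (0 : ℝ), Tendsto (fun N : ℕ × ℕ =>
    ((((Finset.range (N.1 + 1)) ×ˢ (Finset.range (N.2 + 1))).filter
        (fun jk => ε ≤ |a jk.1 jk.2 - l|)).card : ℝ) / (N.1 * N.2))
    atTop (nhds 0)

/-- A bivariate modulus of continuity. -/
def IsModulus2 (ω : ℝ → ℝ → ℝ) : Prop :=
  (∀ a b, 0 ≤ a → 0 ≤ b → 0 ≤ ω a b) ∧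
  (∀ a a' b, 0 ≤ a → a ≤ a' → 0 ≤ b → ω a b ≤ ω a' b) ∧
  (∀ a b b', 0 ≤ a → 0 ≤ b → b ≤ b' → ω a b ≤ ω a b') ∧
  (∀ a a' b, 0 ≤ a → 0 ≤ a' → 0 ≤ b → ω (a + a') b ≤ ω a b + ω a' b) ∧
  (∀ a b b', 0 ≤ a → 0 ≤ b → 0 ≤ b' → ω a (b + b') ≤ ω a b + ω a b') ∧
  Tendsto (fun d : ℝ × ℝ => ω d.1 d.2)
    (nhdsWithin (0, 0) (Set.Ioi 0 ×ˢ Set.Ioi 0)) (nhds 0)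

/-- Membership in the class `H_{ω₂}`. -/
def MemHomega2 (ω g : ℝ → ℝ → ℝ) : Prop :=
  ∀ u₁ v₁ u₂ v₂ : ℝ, 0 ≤ u₁ → 0 ≤ v₁ → 0 ≤ u₂ → 0 ≤ v₂ →
    |g u₁ v₁ - g u₂ v₂| ≤
      ω |u₁ / (1 + u₁) - u₂ / (1 + u₂)| |v₁ / (1 + v₁) - v₂ / (1 + v₂)|

/-- The bivariate modulus `ω̃(g; δ₁, δ₂)`. -/
def omegaTilde2 (g : ℝ → ℝ → ℝ) (δ₁ δ₂ : ℝ) : ℝ :=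
  sSup {d | ∃ t s x y : ℝ, 0 ≤ t ∧ 0 ≤ s ∧ 0 ≤ x ∧ 0 ≤ y ∧
    |t / (1 + t) - x / (1 + x)| ≤ δ₁ ∧ |s / (1 + s) - y / (1 + y)| ≤ δ₂ ∧
    d = |g t s - g x y|}

/-!
The weights of `L_n^{p,q}` are the summands of the `(p,q)`-Gauss binomial formula
`∑ₖ p^(m-k choose 2) q^(k choose 2) [m choose k] aᵐ⁻ᵏ bᵏ = ∏_{s<m} (pˢ a + qˢ b)`,
whose sum for `a = 1, b = x` is `ℓ_m(x)`. Since `[n+1] = p^(n-k+1) [k] + q^k [n-k+1]`,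
the node `t_k` satisfies `t_k / (1 + t_k) = p^(n-k+1) [k] / [n+1]`, and the absorption
identity `[n choose k] [k] = [n] [n-1 choose k-1]` turns `∑ₖ t_k/(1+t_k) · (weight)ₖ` into
`p x [n]/[n+1]` times a Gauss sum of order `n - 1` evaluated at `(p, q x)`, which equals
`ℓ_n(x) / (1 + x)`.
-/

section

variable {p q : ℝ}

lemma pqInt_pos (hq : 0 < q) (hqp : q < p) {k : ℕ} (hk : k ≠ 0) : 0 < pqInt p q k :=
  div_pos (sub_pos.2 (pow_lt_pow_left₀ hqp hq.le hk)) (sub_pos.2 hqp)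

lemma pqInt_add (hqp : q ≠ p) (a b : ℕ) :
    pqInt p q (a + b) = p ^ a * pqInt p q b + q ^ b * pqInt p q a := by
  have : p - q ≠ 0 := sub_ne_zero.2 hqp.symm
  unfold pqInt
  field_simp
  ring

lemma pqFact_pos (hq : 0 < q) (hqp : q < p) (n : ℕ) : 0 < pqFact p q n := by
  induction n with
  | zero => exact one_pos
  | succ n ih => exact mul_pos ih (pqInt_pos hq hqp n.succ_ne_zero)

lemma pqBinom_zero_right (hq : 0 < q) (hqp : q < p) (m : ℕ) : pqBinom p q m 0 = 1 := by
  simp [pqBinom, pqFact, (pqFact_pos hq hqp m).ne']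

lemma pqBinom_self (hq : 0 < q) (hqp : q < p) (m : ℕ) : pqBinom p q m m = 1 := by
  simp [pqBinom, pqFact, (pqFact_pos hq hqp m).ne']

lemma pqBinom_succ_succ (hq : 0 < q) (hqp : q < p) {m k : ℕ} (hk : k < m) :
    pqBinom p q (m + 1) (k + 1) =
      q ^ (k + 1) * pqBinom p q m (k + 1) + p ^ (m - k) * pqBinom p q m k := by
  obtain ⟨d, rfl⟩ : ∃ d, m = k + d + 1 := ⟨m - k - 1, by omega⟩
  have hsplit := pqInt_add hqp.ne (d + 1) (k + 1)
  rw [show d + 1 + (k + 1) = k + d + 1 + 1 by omega] at hsplit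
  have := (pqFact_pos hq hqp (k + d + 1)).ne'
  have := (pqFact_pos hq hqp k).ne'
  have := (pqFact_pos hq hqp d).ne'
  have := (pqInt_pos hq hqp k.succ_ne_zero).ne'
  have := (pqInt_pos hq hqp d.succ_ne_zero).ne'
  simp only [pqBinom, show k + d + 1 + 1 - (k + 1) = d + 1 by omega,
    show k + d + 1 - (k + 1) = d by omega, show k + d + 1 - k = d + 1 by omega, pqFact, hsplit]
  field_simp
  ring

lemma pqBinom_succ_mul_pqInt (hq : 0 < q) (hqp : q < p) (m k : ℕ) :
    pqBinom p q (m + 1) (k + 1) * pqInt p q (k + 1) = pqInt p q (m + 1) * pqBinom p q m k := by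
  have := (pqFact_pos hq hqp k).ne'
  have := (pqFact_pos hq hqp (m - k)).ne'
  have := (pqInt_pos hq hqp k.succ_ne_zero).ne'
  simp only [pqBinom, pqFact, Nat.add_sub_add_right]
  field_simp

def gaussTerm (p q : ℝ) (m : ℕ) (a b : ℝ) (k : ℕ) : ℝ :=
  p ^ ((m - k) * (m - k - 1) / 2) * q ^ (k * (k - 1) / 2) * pqBinom p q m k * a ^ (m - k) * b ^ k

lemma sum_range_succ_succ_eq_add_mul {R : Type*} [CommSemiring R] {f g : ℕ → R} {a b : R}
    (m : ℕ) (h₀ : f 0 = a * g 0) (hlast : f (m + 1) = b * g m)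
    (hmid : ∀ k < m, f (k + 1) = b * g k + a * g (k + 1)) :
    ∑ k ∈ range (m + 2), f k = (a + b) * ∑ k ∈ range (m + 1), g k := by
  rw [sum_range_succ', sum_range_succ, sum_congr rfl fun k hk => hmid k (mem_range.1 hk),
    sum_add_distrib, h₀, hlast, add_mul, mul_sum, mul_sum, sum_range_succ' (fun k => a * g k),
    sum_range_succ (fun k => b * g k)]
  ring

lemma gaussTerm_succ_zero (hq : 0 < q) (hqp : q < p) (m : ℕ) (a b : ℝ) :
    gaussTerm p q (m + 1) a b 0 = a * gaussTerm p q m (p * a) (q * b) 0 := by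
  simp only [gaussTerm, Nat.sub_zero, Nat.triangle_succ, pqBinom_zero_right hq hqp]
  ring

lemma gaussTerm_succ_self (hq : 0 < q) (hqp : q < p) (m : ℕ) (a b : ℝ) :
    gaussTerm p q (m + 1) a b (m + 1) = b * gaussTerm p q m (p * a) (q * b) m := by
  simp only [gaussTerm, Nat.sub_self, Nat.triangle_succ, pqBinom_self hq hqp]
  ring

lemma gaussTerm_succ_succ (hq : 0 < q) (hqp : q < p) {m k : ℕ} (hk : k < m) (a b : ℝ) :
    gaussTerm p q (m + 1) a b (k + 1) =
      b * gaussTerm p q m (p * a) (q * b) k + a * gaussTerm p q m (p * a) (q * b) (k + 1) := by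
  obtain ⟨d, rfl⟩ : ∃ d, m = k + d + 1 := ⟨m - k - 1, by omega⟩
  simp only [gaussTerm, pqBinom_succ_succ hq hqp hk,
    show k + d + 1 + 1 - (k + 1) = d + 1 by omega, show k + d + 1 - (k + 1) = d by omega,
    show k + d + 1 - k = d + 1 by omega, Nat.triangle_succ, pow_add, mul_pow]
  ring

theorem sum_gaussTerm (hq : 0 < q) (hqp : q < p) (m : ℕ) (a b : ℝ) :
    ∑ k ∈ range (m + 1), gaussTerm p q m a b k = ∏ s ∈ range m, (p ^ s * a + q ^ s * b) := by
  induction m generalizing a b with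
  | zero => simp [gaussTerm, pqBinom, pqFact]
  | succ m ih =>
    rw [sum_range_succ_succ_eq_add_mul m (gaussTerm_succ_zero hq hqp m a b)
      (gaussTerm_succ_self hq hqp m a b) fun k hk => gaussTerm_succ_succ hq hqp hk a b,
      ih, prod_range_succ', mul_comm]
    simp only [pow_succ, pow_zero, one_mul, mul_assoc]

lemma bbh_eq_sum_gaussTerm (f : ℝ → ℝ) (n : ℕ) (x : ℝ) :
    bbh p q n f x =
      p * q / pqEll p q n x * ∑ k ∈ range (n + 1), f (pqNode p q n k) * gaussTerm p q n 1 x k := by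
  simp only [bbh, gaussTerm, one_pow, mul_one, mul_assoc]

lemma pqEll_succ (m : ℕ) (x : ℝ) :
    pqEll p q (m + 1) x = (1 + x) * ∏ s ∈ range m, (p ^ s * p + q ^ s * (q * x)) := by
  simp only [pqEll, prod_range_succ', pow_succ, pow_zero, one_mul, mul_assoc]
  ring

lemma pqNode_div_one_add (hq : 0 < q) (hqp : q < p) {n k : ℕ} (hk : k ≤ n) :
    pqNode p q n k / (1 + pqNode p q n k) =
      p ^ (n - k + 1) * pqInt p q k / pqInt p q (n + 1) := by
  have hD : 0 < pqInt p q (n - k + 1) * q ^ k :=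
    mul_pos (pqInt_pos hq hqp (n - k).succ_ne_zero) (pow_pos hq k)
  have hsplit := pqInt_add hqp.ne (n - k + 1) k
  rw [show n - k + 1 + k = n + 1 by omega] at hsplit
  rw [pqNode, hsplit, one_add_div hD.ne', div_div_div_cancel_right₀ hD.ne']
  ring

lemma pqNode_div_one_add_mul_gaussTerm_succ (hq : 0 < q) (hqp : q < p) {m j : ℕ} (hj : j ≤ m)
    (x : ℝ) :
    pqNode p q (m + 1) (j + 1) / (1 + pqNode p q (m + 1) (j + 1)) *
        gaussTerm p q (m + 1) 1 x (j + 1) =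
      p * x * pqInt p q (m + 1) / pqInt p q (m + 2) * gaussTerm p q m p (q * x) j := by
  obtain ⟨d, rfl⟩ : ∃ d, m = j + d := ⟨m - j, by omega⟩
  rw [pqNode_div_one_add hq hqp (by omega)]
  have habs := pqBinom_succ_mul_pqInt hq hqp (j + d) j
  simp only [gaussTerm, show j + d + 1 - (j + 1) = d by omega, show j + d - j = d by omega,
    Nat.triangle_succ, pow_add, mul_pow, one_pow]
  rw [div_mul_eq_mul_div, div_mul_eq_mul_div]
  congr 1
  linear_combination
    (p ^ (d * (d - 1) / 2) * q ^ (j * (j - 1) / 2) * q ^ j * x ^ j * x * p ^ d * p) * habs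

theorem sum_pqNode_div_one_add_mul_gaussTerm (hq : 0 < q) (hqp : q < p) (m : ℕ) (x : ℝ) :
    ∑ k ∈ range (m + 2), pqNode p q (m + 1) k / (1 + pqNode p q (m + 1) k) *
        gaussTerm p q (m + 1) 1 x k =
      p * x * pqInt p q (m + 1) / pqInt p q (m + 2) *
        ∏ s ∈ range m, (p ^ s * p + q ^ s * (q * x)) := by
  rw [sum_range_succ', sum_congr rfl fun j hj =>
      pqNode_div_one_add_mul_gaussTerm_succ hq hqp (Nat.lt_succ_iff.1 (mem_range.1 hj)) x,
    ← mul_sum, sum_gaussTerm hq hqp]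
  simp [pqNode, pqInt]

end

theorem bbh_first_moment_general (n : ℕ) (hn : 1 ≤ n) (p q x : ℝ)
    (hq : 0 < q) (hqp : q < p) (hx : 0 ≤ x) :
    bbh p q n (fun t => t / (1 + t)) x =
      p ^ 2 * q * (pqInt p q n / pqInt p q (n + 1)) * (x / (1 + x)) := by
  obtain ⟨m, rfl⟩ : ∃ m, n = m + 1 := ⟨n - 1, by omega⟩
  have hprod : 0 < ∏ s ∈ range m, (p ^ s * p + q ^ s * (q * x)) :=
    prod_pos fun s _ => by have := hq.trans hqp; positivity
  have := (pqInt_pos hq hqp (m + 1).succ_ne_zero).ne'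
  rw [bbh_eq_sum_gaussTerm, sum_pqNode_div_one_add_mul_gaussTerm hq hqp, pqEll_succ]
  generalize ∏ s ∈ range m, (p ^ s * p + q ^ s * (q * x)) = P at hprod ⊢
  field_simp

/-- Lemma 2.1(2). -/
theorem bbh_first_moment (n : ℕ) (hn : 1 ≤ n) (p q x : ℝ)
    (hq : 0 < q) (hqp : q < p) (hp : p ≤ 1) (hx : 0 ≤ x) :
    bbh p q n (fun t => t / (1 + t)) x =
      p ^ 2 * q * (pqInt p q n / pqInt p q (n + 1)) * (x / (1 + x)) :=
  bbh_first_moment_general n hn p q x hq hqp hx
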